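/- arXiv:2504.17345 — 2 statements merged into one kernel-verified Lean document; each statement's English description precedes it below -/
import Mathlib

section
/- The map λ ↦ √(λ + k±²) (principal branch) is analytic on ℂ \ (-∞, -k±²] and coincides with β±(λ) on Λ±; moreover for every λ ∈ 𝔻 one has √(λ + k₊²) + √(λ + k₋²) ≠ 0, so that R̃±(λ) := (√(λ + k±²) - √(λ + k∓²))/(√(λ + k₊²) + √(λ + k₋²)) and T̃±(λ) := 2√(λ + k±²)/(√(λ + k₊²) + √(λ + k₋²)) are analytic on 𝔻 and coincide with R±(λ) and T±(λ) respectively on Λ±. -/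
open MeasureTheory Real Set Complex

/-- Transverse wavenumber `β(λ)`. -/
noncomputable def beta (k l : ℝ) : ℂ :=
  if -k ^ 2 ≤ l then (Real.sqrt (l + k ^ 2) : ℂ)
  else Complex.I * (Real.sqrt (-l - k ^ 2) : ℂ)

/-- Reflection coefficient. -/
noncomputable def Rcoef (ks ko l : ℝ) : ℂ :=
  (beta ks l - beta ko l) / (beta ks l + beta ko l)

/-- Transmission coefficient. -/
noncomputable def Tcoef (ks ko l : ℝ) : ℂ :=
  2 * beta ks l / (beta ks l + beta ko l)

/-- The principal branch of `λ ↦ √(λ + k²)` (`√z = |z|^{1/2} e^{i arg z / 2}`,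
`arg z ∈ (-π, π)`, realized as `z^{1/2}` with the principal power). -/
noncomputable def csq (k : ℝ) (z : ℂ) : ℂ := (z + (k : ℂ) ^ 2) ^ ((1 : ℂ) / 2)

/-- The half-line `(-∞, c]` on the real axis, viewed as a subset of `ℂ`. -/
def slit (c : ℝ) : Set ℂ := {z : ℂ | z.im = 0 ∧ z.re ≤ c}

/-- Analytic continuation `R̃±` of the reflection coefficients. -/
noncomputable def Rtil (ks ko : ℝ) (z : ℂ) : ℂ :=
  (csq ks z - csq ko z) / (csq ks z + csq ko z)

/-- Analytic continuation `T̃±` of the transmission coefficients. -/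
noncomputable def Ttil (ks ko : ℝ) (z : ℂ) : ℂ :=
  2 * csq ks z / (csq ks z + csq ko z)

lemma cpow_half_ofReal (x : ℝ) :
    (x : ℂ) ^ ((1 : ℂ)/2) =
      if 0 ≤ x then (Real.sqrt x : ℂ) else Complex.I * (Real.sqrt (-x) : ℂ) := by
  rcases le_or_gt 0 x with hx | hx
  · rw [if_pos hx]
    have h := Complex.ofReal_cpow hx (1/2)
    rw [Real.sqrt_eq_rpow, h]
    norm_num
  · rw [if_neg (not_le.2 hx)]
    rw [Complex.ofReal_cpow_of_nonpos hx.le]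
    have h1 : ((-x : ℝ) : ℂ) ^ ((1:ℂ)/2) = (Real.sqrt (-x) : ℂ) := by
      have h := Complex.ofReal_cpow (by linarith : (0:ℝ) ≤ -x) (1/2)
      rw [show ((1:ℂ)/2) = (((1/2 : ℝ)) : ℂ) by norm_num, ← h, Real.sqrt_eq_rpow]
    have h2 : Complex.exp ((π : ℂ) * Complex.I * ((1:ℂ)/2)) = Complex.I := by
      have e : (π : ℂ) * Complex.I * ((1:ℂ)/2) = ((π/2 : ℝ) : ℂ) * Complex.I := by
        push_cast; ring
      rw [e, Complex.exp_mul_I, ← Complex.ofReal_cos, ← Complex.ofReal_sin,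
        Real.cos_pi_div_two, Real.sin_pi_div_two]
      simp
    rw [show (-(x:ℂ)) = ((-x : ℝ) : ℂ) by push_cast; ring, h1, h2]; ring

lemma cpow_half_re_pos {w : ℂ} (hw : w ∈ Complex.slitPlane) :
    0 < (w ^ ((1:ℂ)/2)).re := by
  have hne : w ≠ 0 := Complex.slitPlane_ne_zero hw
  rw [Complex.cpow_def_of_ne_zero hne, Complex.exp_re]
  have him : (Complex.log w * ((1:ℂ)/2)).im = w.arg / 2 := by
    simp [Complex.mul_im, Complex.log_im]
    ring
  rw [him]
  have h1 : -π < w.arg := Complex.neg_pi_lt_arg w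
  have h2 : w.arg < π := by
    rcases (Complex.arg_le_pi w).lt_or_eq with h | h
    · exact h
    · rw [Complex.arg_eq_pi_iff] at h
      rcases Complex.mem_slitPlane_iff.1 hw with h' | h' <;> [linarith [h.1]; exact absurd h.2 h']
  have hcos : 0 < Real.cos (w.arg / 2) :=
    Real.cos_pos_of_mem_Ioo ⟨by linarith, by linarith⟩
  exact mul_pos (Real.exp_pos _) hcos

lemma csq_eq_beta (k l : ℝ) : csq k (l : ℂ) = beta k l := by
  unfold csq beta
  rw [show ((l : ℂ) + (k : ℂ) ^ 2) = ((l + k ^ 2 : ℝ) : ℂ) by push_cast; ring, cpow_half_ofReal]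
  by_cases h : -k ^ 2 ≤ l
  · rw [if_pos (by linarith), if_pos h]
  · rw [if_neg (by push_neg at h ⊢; linarith), if_neg h]
    rw [show -(l + k ^ 2) = -l - k ^ 2 by ring]

lemma mem_slit_aux (k : ℝ) {z : ℂ} (hz : z ∈ (slit (-k ^ 2))ᶜ) :
    z + (k : ℂ) ^ 2 ∈ Complex.slitPlane := by
  rw [Complex.mem_slitPlane_iff]
  simp only [slit, mem_compl_iff, mem_setOf_eq, not_and, not_le] at hz
  rw [show ((k : ℂ) ^ 2) = ((k ^ 2 : ℝ) : ℂ) by push_cast; ring]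
  by_cases h : z.im = 0
  · left
    have := hz h
    simp only [Complex.add_re, Complex.ofReal_re]
    linarith
  · right
    simp only [Complex.add_im, Complex.ofReal_im, add_zero]
    exact h

lemma csq_analytic (k : ℝ) : AnalyticOnNhd ℂ (csq k) (slit (-k ^ 2))ᶜ := by
  intro z hz
  exact ((analyticAt_id.add analyticAt_const).cpow analyticAt_const (mem_slit_aux k hz))

lemma slit_mono {c c' : ℝ} (h : c ≤ c') : slit c ⊆ slit c' :=
  fun z hz => ⟨hz.1, hz.2.trans h⟩

/-- The maps `λ ↦ √(λ + k±²)` (principal branch) are analytic on `ℂ \ (-∞, -k±²]` and coincide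
with `β±` on `Λ±`; the sum `√(λ + k₊²) + √(λ + k₋²)` never vanishes on
`𝔻 = ℂ \ (-∞, -min(k₋², k₊²)]`, so that `R̃±` and `T̃±` are analytic on `𝔻` and coincide with
`R±`, `T±` on `Λ±`. -/
theorem analytic_continuation_coefficients (km kp : ℝ) (hkm : 0 < km) (hkp : 0 < kp) :
    AnalyticOnNhd ℂ (csq kp) (slit (-kp ^ 2))ᶜ ∧
    AnalyticOnNhd ℂ (csq km) (slit (-km ^ 2))ᶜ ∧
    (∀ l : ℝ, -kp ^ 2 < l → csq kp (l : ℂ) = beta kp l) ∧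
    (∀ l : ℝ, -km ^ 2 < l → csq km (l : ℂ) = beta km l) ∧
    (∀ z ∈ (slit (-(min (km ^ 2) (kp ^ 2))))ᶜ, csq kp z + csq km z ≠ 0) ∧
    AnalyticOnNhd ℂ (Rtil kp km) (slit (-(min (km ^ 2) (kp ^ 2))))ᶜ ∧
    AnalyticOnNhd ℂ (Rtil km kp) (slit (-(min (km ^ 2) (kp ^ 2))))ᶜ ∧
    AnalyticOnNhd ℂ (Ttil kp km) (slit (-(min (km ^ 2) (kp ^ 2))))ᶜ ∧
    AnalyticOnNhd ℂ (Ttil km kp) (slit (-(min (km ^ 2) (kp ^ 2))))ᶜ ∧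
    (∀ l : ℝ, -kp ^ 2 < l →
      Rtil kp km (l : ℂ) = Rcoef kp km l ∧ Ttil kp km (l : ℂ) = Tcoef kp km l) ∧
    (∀ l : ℝ, -km ^ 2 < l →
      Rtil km kp (l : ℂ) = Rcoef km kp l ∧ Ttil km kp (l : ℂ) = Tcoef km kp l) := by
  
  set D := (slit (-(min (km ^ 2) (kp ^ 2))))ᶜ with hD
  have hsubp : D ⊆ (slit (-kp ^ 2))ᶜ :=
    compl_subset_compl.2 (slit_mono (by have := min_le_right (km ^ 2) (kp ^ 2); linarith))
  have hsubm : D ⊆ (slit (-km ^ 2))ᶜ :=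
    compl_subset_compl.2 (slit_mono (by have := min_le_left (km ^ 2) (kp ^ 2); linarith))
  have hrep : ∀ z ∈ D, 0 < (csq kp z).re :=
    fun z hz => cpow_half_re_pos (mem_slit_aux kp (hsubp hz))
  have hrem : ∀ z ∈ D, 0 < (csq km z).re :=
    fun z hz => cpow_half_re_pos (mem_slit_aux km (hsubm hz))
  have hne : ∀ z ∈ D, csq kp z + csq km z ≠ 0 := by
    intro z hz h
    have : (csq kp z + csq km z).re = 0 := by rw [h]; simp
    rw [Complex.add_re] at this
    have h1 := hrep z hz
    have h2 := hrem z hz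
    linarith
  have hap : AnalyticOnNhd ℂ (csq kp) D := fun z hz => csq_analytic kp z (hsubp hz)
  have ham : AnalyticOnNhd ℂ (csq km) D := fun z hz => csq_analytic km z (hsubm hz)
  have hne' : ∀ z ∈ D, csq km z + csq kp z ≠ 0 := by
    intro z hz h
    exact hne z hz (by rw [add_comm]; exact h)
  refine ⟨csq_analytic kp, csq_analytic km, fun l _ => csq_eq_beta kp l,
    fun l _ => csq_eq_beta km l, hne, ?_, ?_, ?_, ?_, ?_, ?_⟩
  · exact (hap.sub ham).div (hap.add ham) hne
  · exact (ham.sub hap).div (ham.add hap) hne'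
  · exact ((analyticOnNhd_const.mul hap)).div (hap.add ham) hne
  · exact ((analyticOnNhd_const.mul ham)).div (ham.add hap) hne'
  · intro l _
    constructor <;> simp only [Rtil, Ttil, Rcoef, Tcoef, csq_eq_beta]
  · intro l _
    constructor <;> simp only [Rtil, Ttil, Rcoef, Tcoef, csq_eq_beta]
end

section
/- For every φ ∈ C_c^∞(ℝ), the function ψ := -φ'' - K²φ belongs to L¹(ℝ) ∩ L²(ℝ) and the generalized Fourier transform diagonalizes the operator φ ↦ -φ'' - K²φ: for every λ ∈ Λ±, F±ψ(λ) = λ·F±φ(λ). -/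
open MeasureTheory Real Set Complex

/-- Generalized eigenfunction `Ψ⁺(λ, x)`. -/
noncomputable def Psip (km kp l x : ℝ) : ℂ :=
  if 0 < x then
    Complex.exp (-Complex.I * beta kp l * x) + Rcoef kp km l * Complex.exp (Complex.I * beta kp l * x)
  else
    Tcoef kp km l * Complex.exp (-Complex.I * beta km l * x)

/-- Generalized eigenfunction `Ψ⁻(λ, x)`. -/
noncomputable def Psim (km kp l x : ℝ) : ℂ :=
  if x < 0 then
    Complex.exp (Complex.I * beta km l * x) + Rcoef km kp l * Complex.exp (-Complex.I * beta km l * x)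
  else
    Tcoef km kp l * Complex.exp (Complex.I * beta kp l * x)

/-- Spectral weight `ρ(λ) = 1 / (4π √(λ + k²))`. -/
noncomputable def rho (k l : ℝ) : ℝ := 1 / (4 * π * Real.sqrt (l + k ^ 2))

/-- Component `F⁺φ(λ) = ∫ φ(x) conj(Ψ⁺(λ, x)) dx` of the generalized Fourier transform. -/
noncomputable def Fp (km kp : ℝ) (φ : ℝ → ℂ) (l : ℝ) : ℂ :=
  ∫ x : ℝ, φ x * (starRingEnd ℂ) (Psip km kp l x)

/-- Component `F⁻φ(λ) = ∫ φ(x) conj(Ψ⁻(λ, x)) dx` of the generalized Fourier transform. -/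
noncomputable def Fm (km kp : ℝ) (φ : ℝ → ℂ) (l : ℝ) : ℂ :=
  ∫ x : ℝ, φ x * (starRingEnd ℂ) (Psim km kp l x)

/-- Two-valued wavenumber profile: `K(x) = k₋` for `x < 0` and `K(x) = k₊` for `x > 0`. -/
noncomputable def Kprof (km kp x : ℝ) : ℝ := if x < 0 then km else kp

/-! ### Auxiliary lemmas -/

section Aux

open Filter

lemma beta_sq (k l : ℝ) : beta k l ^ 2 = (l : ℂ) + (k : ℂ) ^ 2 := by
  unfold beta
  split_ifs with h
  · rw [← Complex.ofReal_pow, Real.sq_sqrt (by linarith)]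
    push_cast; ring
  · have h2 : 0 ≤ -l - k ^ 2 := by nlinarith [not_le.mp h]
    rw [mul_pow, Complex.I_sq, ← Complex.ofReal_pow, Real.sq_sqrt h2]
    push_cast; ring

lemma beta_re_pos {k l : ℝ} (h : -k ^ 2 < l) : 0 < (beta k l).re := by
  unfold beta
  rw [if_pos h.le]
  simpa using Real.sqrt_pos.mpr (by linarith)

lemma beta_re_nonneg (k l : ℝ) : 0 ≤ (beta k l).re := by
  unfold beta
  split_ifs with h
  · simpa using Real.sqrt_nonneg _
  · simp [Complex.mul_re]

lemma sum_ne {km kp l : ℝ} (h : -kp ^ 2 < l) : beta kp l + beta km l ≠ 0 := by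
  intro hc
  have h1 := beta_re_pos h
  have h2 := beta_re_nonneg km l
  have := congrArg Complex.re hc
  simp only [Complex.add_re, Complex.zero_re] at this
  linarith

lemma matchT {ks ko l : ℝ} (hS : beta ks l + beta ko l ≠ 0) :
    Tcoef ks ko l = 1 + Rcoef ks ko l := by
  unfold Tcoef Rcoef
  field_simp
  ring

lemma matchD {ks ko l : ℝ} (hS : beta ks l + beta ko l ≠ 0) :
    Tcoef ks ko l * beta ko l = (1 - Rcoef ks ko l) * beta ks l := by
  unfold Tcoef Rcoef
  field_simp
  ring

lemma hasDerivAt_cexp_mul (c : ℂ) (x : ℝ) :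
    HasDerivAt (fun x : ℝ => Complex.exp (c * x)) (c * Complex.exp (c * x)) x := by
  have h1 : HasDerivAt (fun x : ℝ => (x : ℂ)) 1 x := by
    simpa using (hasDerivAt_id x).ofReal_comp
  simpa [mul_comm] using (h1.const_mul c).cexp

/-- General exponential solution on a half-line. -/
noncomputable def sol (A B c : ℂ) : ℝ → ℂ :=
  fun x => A * Complex.exp (c * x) + B * Complex.exp (-c * x)

lemma sol_hasDerivAt (A B c : ℂ) (x : ℝ) :
    HasDerivAt (sol A B c) (sol (A * c) (-(B * c)) c x) x := by
  have h := ((hasDerivAt_cexp_mul c x).const_mul A).add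
    ((hasDerivAt_cexp_mul (-c) x).const_mul B)
  have he : sol (A * c) (-(B * c)) c x
      = A * (c * Complex.exp (c * x)) + B * (-c * Complex.exp (-c * x)) := by
    simp [sol]; ring
  rw [he]; exact h

lemma sol_hasDerivAt2 (A B c : ℂ) (x : ℝ) :
    HasDerivAt (sol (A * c) (-(B * c)) c) (c ^ 2 * sol A B c x) x := by
  have h := sol_hasDerivAt (A * c) (-(B * c)) c x
  have he : sol (A * c * c) (-(-(B * c) * c)) c x = c ^ 2 * sol A B c x := by
    simp [sol]; ring
  rw [← he]; exact h

lemma neg_I_beta_sq (k l : ℝ) : (-(Complex.I * beta k l)) ^ 2 = -((l : ℂ) + (k : ℂ) ^ 2) := by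
  rw [neg_sq, mul_pow, Complex.I_sq, beta_sq]; ring

lemma I_beta_sq (k l : ℝ) : (Complex.I * beta k l) ^ 2 = -((l : ℂ) + (k : ℂ) ^ 2) := by
  rw [mul_pow, Complex.I_sq, beta_sq]; ring

lemma hcs_of_three {E : Type*} [Zero E] {f : ℝ → E} {φ : ℝ → ℂ} (hφc : HasCompactSupport φ)
    (hf : ∀ x, φ x = 0 → deriv φ x = 0 → deriv (deriv φ) x = 0 → f x = 0) :
    HasCompactSupport f := by
  have hK : IsCompact ((tsupport φ ∪ tsupport (deriv φ)) ∪ tsupport (deriv (deriv φ))) :=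
    (hφc.union hφc.deriv).union hφc.deriv.deriv
  have hcl : IsClosed ((tsupport φ ∪ tsupport (deriv φ)) ∪ tsupport (deriv (deriv φ))) :=
    ((isClosed_tsupport φ).union (isClosed_tsupport _)).union (isClosed_tsupport _)
  refine IsCompact.of_isClosed_subset hK isClosed_closure (closure_minimal ?_ hcl)
  intro x hx
  by_contra hmem
  simp only [Set.mem_union, not_or] at hmem
  exact hx (hf x (image_eq_zero_of_notMem_tsupport hmem.1.1)
    (image_eq_zero_of_notMem_tsupport hmem.1.2) (image_eq_zero_of_notMem_tsupport hmem.2))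

lemma hcs_tendsto_atTop {f : ℝ → ℂ} (hf : HasCompactSupport f) :
    Tendsto f atTop (nhds 0) := by
  obtain ⟨M, hM⟩ := hf.isCompact.bddAbove
  apply tendsto_const_nhds.congr'
  filter_upwards [eventually_gt_atTop M] with x hx
  exact (image_eq_zero_of_notMem_tsupport fun hmem => absurd (hM hmem) (not_le.mpr hx)).symm

lemma hcs_tendsto_atBot {f : ℝ → ℂ} (hf : HasCompactSupport f) :
    Tendsto f atBot (nhds 0) := by
  obtain ⟨M, hM⟩ := hf.isCompact.bddBelow
  apply tendsto_const_nhds.congr'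
  filter_upwards [eventually_lt_atBot M] with x hx
  exact (image_eq_zero_of_notMem_tsupport fun hmem => absurd (hM hmem) (not_le.mpr hx)).symm

/-- Boundary bracket for integration by parts. -/
noncomputable def Gbd (φ w w' : ℝ → ℂ) : ℝ → ℂ :=
  fun x => -(deriv φ x) * (starRingEnd ℂ) (w x) + φ x * (starRingEnd ℂ) (w' x)

lemma Gbd_hasDerivAt (k l : ℝ) (φ w w' : ℝ → ℂ)
    (hφ : ContDiff ℝ (⊤ : ℕ∞) φ)
    (hw : ∀ x, HasDerivAt w (w' x) x)
    (hw' : ∀ x, HasDerivAt w' (-((l : ℂ) + (k : ℂ) ^ 2) * w x) x) (x : ℝ) :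
    HasDerivAt (Gbd φ w w')
      ((-(deriv (deriv φ) x) - ((k : ℝ) : ℂ) ^ 2 * φ x) * (starRingEnd ℂ) (w x)
        - (l : ℂ) * (φ x * (starRingEnd ℂ) (w x))) x := by
  have hφi : ContDiff ℝ ((⊤:ℕ∞) : WithTop ℕ∞) φ := hφ.of_le (by simp)
  have hφ1 : HasDerivAt φ (deriv φ x) x :=
    (hφi.differentiable (by simp) x).hasDerivAt
  have hφd : ContDiff ℝ ((⊤:ℕ∞) : WithTop ℕ∞) (deriv φ) := (contDiff_infty_iff_deriv.mp hφi).2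
  have hφ2 : HasDerivAt (deriv φ) (deriv (deriv φ) x) x :=
    (hφd.differentiable (by simp) x).hasDerivAt
  have hcw : HasDerivAt (fun y => (starRingEnd ℂ) (w y)) ((starRingEnd ℂ) (w' x)) x := by
    simpa only [starRingEnd_apply] using (hw x).star
  have hcw' : HasDerivAt (fun y => (starRingEnd ℂ) (w' y))
      ((starRingEnd ℂ) (-((l : ℂ) + (k : ℂ) ^ 2) * w x)) x := by
    simpa only [starRingEnd_apply] using (hw' x).star
  have h := (hφ2.neg.mul hcw).add (hφ1.mul hcw')
  convert h using 1
  · rfl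
  · rfl
  simp only [map_mul, map_neg, map_add, map_pow, Complex.conj_ofReal, Pi.neg_apply]
  ring

section half
variable {k l : ℝ} {φ w w' : ℝ → ℂ}

lemma fker_integrable (hφ : ContDiff ℝ (⊤ : ℕ∞) φ) (hφc : HasCompactSupport φ)
    (hwc : Continuous w) :
    Integrable (fun x => (-(deriv (deriv φ) x) - ((k : ℝ) : ℂ) ^ 2 * φ x)
      * (starRingEnd ℂ) (w x)) := by
  have hφi : ContDiff ℝ ((⊤:ℕ∞) : WithTop ℕ∞) φ := hφ.of_le (by simp)
  have hφd : ContDiff ℝ ((⊤:ℕ∞) : WithTop ℕ∞) (deriv φ) := (contDiff_infty_iff_deriv.mp hφi).2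
  have hφdd : Continuous (deriv (deriv φ)) := (contDiff_infty_iff_deriv.mp hφd).2.continuous
  have hcont : Continuous (fun x => (-(deriv (deriv φ) x) - ((k : ℝ) : ℂ) ^ 2 * φ x)
      * (starRingEnd ℂ) (w x)) :=
    (hφdd.neg.sub (continuous_const.mul hφ.continuous)).mul (continuous_conj.comp hwc)
  exact hcont.integrable_of_hasCompactSupport
    (hcs_of_three hφc fun x h1 _ h3 => by simp [h1, h3])

lemma gker_integrable (hφ : ContDiff ℝ (⊤ : ℕ∞) φ) (hφc : HasCompactSupport φ)
    (hwc : Continuous w) :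
    Integrable (fun x => φ x * (starRingEnd ℂ) (w x)) := by
  have hcont : Continuous (fun x => φ x * (starRingEnd ℂ) (w x)) :=
    hφ.continuous.mul (continuous_conj.comp hwc)
  exact hcont.integrable_of_hasCompactSupport
    (hcs_of_three hφc fun x h1 _ _ => by simp [h1])

lemma Gbd_props (hφ : ContDiff ℝ (⊤ : ℕ∞) φ) (hφc : HasCompactSupport φ)
    (hwc : Continuous w) (hw'c : Continuous w') :
    HasCompactSupport (Gbd φ w w') ∧ Continuous (Gbd φ w w') := by
  have hφi : ContDiff ℝ ((⊤:ℕ∞) : WithTop ℕ∞) φ := hφ.of_le (by simp)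
  have hφd : ContDiff ℝ ((⊤:ℕ∞) : WithTop ℕ∞) (deriv φ) := (contDiff_infty_iff_deriv.mp hφi).2
  constructor
  · exact hcs_of_three hφc fun x h1 h2 _ => by simp [Gbd, h1, h2]
  · exact (hφd.continuous.neg.mul (continuous_conj.comp hwc)).add
      (hφ.continuous.mul (continuous_conj.comp hw'c))

lemma halfIoi (hφ : ContDiff ℝ (⊤ : ℕ∞) φ) (hφc : HasCompactSupport φ)
    (hw : ∀ x, HasDerivAt w (w' x) x)
    (hw' : ∀ x, HasDerivAt w' (-((l : ℂ) + (k : ℂ) ^ 2) * w x) x) :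
    ∫ x in Ioi (0:ℝ), (-(deriv (deriv φ) x) - ((k : ℝ) : ℂ) ^ 2 * φ x) * (starRingEnd ℂ) (w x)
      = -(Gbd φ w w' 0) + (l : ℂ) * ∫ x in Ioi (0:ℝ), φ x * (starRingEnd ℂ) (w x) := by
  have hwc : Continuous w :=
    Differentiable.continuous (fun x => HasDerivAt.differentiableAt (hw x))
  have hw'c : Continuous w' :=
    Differentiable.continuous (fun x => HasDerivAt.differentiableAt (hw' x))
  have hfint := fker_integrable (k := k) hφ hφc hwc
  have hgint := gker_integrable hφ hφc hwc
  obtain ⟨hGcs, hGcont⟩ := Gbd_props hφ hφc hwc hw'c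
  have hD : Integrable (fun x => (-(deriv (deriv φ) x) - ((k : ℝ) : ℂ) ^ 2 * φ x)
      * (starRingEnd ℂ) (w x) - (l : ℂ) * (φ x * (starRingEnd ℂ) (w x))) :=
    hfint.sub (hgint.const_mul _)
  have hFTC : ∫ x in Ioi (0:ℝ), ((-(deriv (deriv φ) x) - ((k : ℝ) : ℂ) ^ 2 * φ x)
        * (starRingEnd ℂ) (w x) - (l : ℂ) * (φ x * (starRingEnd ℂ) (w x)))
      = 0 - Gbd φ w w' 0 :=
    integral_Ioi_of_hasDerivAt_of_tendsto hGcont.continuousWithinAt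
      (fun x _ => Gbd_hasDerivAt k l φ w w' hφ hw hw' x) hD.integrableOn
      (hcs_tendsto_atTop hGcs)
  have hsplit : ∫ x in Ioi (0:ℝ), (-(deriv (deriv φ) x) - ((k : ℝ) : ℂ) ^ 2 * φ x)
        * (starRingEnd ℂ) (w x)
      = (∫ x in Ioi (0:ℝ), ((-(deriv (deriv φ) x) - ((k : ℝ) : ℂ) ^ 2 * φ x)
          * (starRingEnd ℂ) (w x) - (l : ℂ) * (φ x * (starRingEnd ℂ) (w x))))
        + ∫ x in Ioi (0:ℝ), (l : ℂ) * (φ x * (starRingEnd ℂ) (w x)) := by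
    rw [← integral_add hD.integrableOn ((hgint.const_mul _).integrableOn)]
    exact setIntegral_congr_fun measurableSet_Ioi fun x _ => by ring
  rw [hsplit, hFTC, MeasureTheory.integral_const_mul]
  ring

lemma halfIic (hφ : ContDiff ℝ (⊤ : ℕ∞) φ) (hφc : HasCompactSupport φ)
    (hw : ∀ x, HasDerivAt w (w' x) x)
    (hw' : ∀ x, HasDerivAt w' (-((l : ℂ) + (k : ℂ) ^ 2) * w x) x) :
    ∫ x in Iic (0:ℝ), (-(deriv (deriv φ) x) - ((k : ℝ) : ℂ) ^ 2 * φ x) * (starRingEnd ℂ) (w x)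
      = Gbd φ w w' 0 + (l : ℂ) * ∫ x in Iic (0:ℝ), φ x * (starRingEnd ℂ) (w x) := by
  have hwc : Continuous w :=
    Differentiable.continuous (fun x => HasDerivAt.differentiableAt (hw x))
  have hw'c : Continuous w' :=
    Differentiable.continuous (fun x => HasDerivAt.differentiableAt (hw' x))
  have hfint := fker_integrable (k := k) hφ hφc hwc
  have hgint := gker_integrable hφ hφc hwc
  obtain ⟨hGcs, hGcont⟩ := Gbd_props hφ hφc hwc hw'c
  have hD : Integrable (fun x => (-(deriv (deriv φ) x) - ((k : ℝ) : ℂ) ^ 2 * φ x)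
      * (starRingEnd ℂ) (w x) - (l : ℂ) * (φ x * (starRingEnd ℂ) (w x))) :=
    hfint.sub (hgint.const_mul _)
  have hFTC : ∫ x in Iic (0:ℝ), ((-(deriv (deriv φ) x) - ((k : ℝ) : ℂ) ^ 2 * φ x)
        * (starRingEnd ℂ) (w x) - (l : ℂ) * (φ x * (starRingEnd ℂ) (w x)))
      = Gbd φ w w' 0 - 0 :=
    integral_Iic_of_hasDerivAt_of_tendsto hGcont.continuousWithinAt
      (fun x _ => Gbd_hasDerivAt k l φ w w' hφ hw hw' x) hD.integrableOn
      (hcs_tendsto_atBot hGcs)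
  have hsplit : ∫ x in Iic (0:ℝ), (-(deriv (deriv φ) x) - ((k : ℝ) : ℂ) ^ 2 * φ x)
        * (starRingEnd ℂ) (w x)
      = (∫ x in Iic (0:ℝ), ((-(deriv (deriv φ) x) - ((k : ℝ) : ℂ) ^ 2 * φ x)
          * (starRingEnd ℂ) (w x) - (l : ℂ) * (φ x * (starRingEnd ℂ) (w x))))
        + ∫ x in Iic (0:ℝ), (l : ℂ) * (φ x * (starRingEnd ℂ) (w x)) := by
    rw [← integral_add hD.integrableOn ((hgint.const_mul _).integrableOn)]
    exact setIntegral_congr_fun measurableSet_Iic fun x _ => by ring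
  rw [hsplit, hFTC, MeasureTheory.integral_const_mul]
  ring

end half

/-- The main integration-by-parts identity, for an eigenfunction glued from `u` (on `x < 0`)
and `v` (on `x ≥ 0`) with matching values and derivatives at `0`. -/
lemma key (km kp l : ℝ) (u v u' v' : ℝ → ℂ)
    (hu : ∀ x, HasDerivAt u (u' x) x)
    (hu' : ∀ x, HasDerivAt u' (-((l : ℂ) + (km : ℂ) ^ 2) * u x) x)
    (hv : ∀ x, HasDerivAt v (v' x) x)
    (hv' : ∀ x, HasDerivAt v' (-((l : ℂ) + (kp : ℂ) ^ 2) * v x) x)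
    (h0 : u 0 = v 0) (h0' : u' 0 = v' 0)
    (φ : ℝ → ℂ) (hφ : ContDiff ℝ (⊤ : ℕ∞) φ) (hφc : HasCompactSupport φ) :
    (∫ x : ℝ, (-(deriv (deriv φ) x) - ((Kprof km kp x : ℝ) : ℂ) ^ 2 * φ x) *
        (starRingEnd ℂ) (if x < 0 then u x else v x))
      = (l : ℂ) * ∫ x : ℝ, φ x * (starRingEnd ℂ) (if x < 0 then u x else v x) := by
  have huc : Continuous u :=
    Differentiable.continuous (fun x => HasDerivAt.differentiableAt (hu x))
  have hvc : Continuous v :=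
    Differentiable.continuous (fun x => HasDerivAt.differentiableAt (hv x))
  have hfm := fker_integrable (k := km) (w := u) hφ hφc huc
  have hfp := fker_integrable (k := kp) (w := v) hφ hφc hvc
  have hgm := gker_integrable (w := u) hφ hφc huc
  have hgp := gker_integrable (w := v) hφ hφc hvc
  have hEFm : EqOn
      (fun x => (-(deriv (deriv φ) x) - ((km : ℝ) : ℂ) ^ 2 * φ x) * (starRingEnd ℂ) (u x))
      (fun x => (-(deriv (deriv φ) x) - ((Kprof km kp x : ℝ) : ℂ) ^ 2 * φ x) *
        (starRingEnd ℂ) (if x < 0 then u x else v x)) (Iio 0) := by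
    intro x hx
    simp only [Kprof, if_pos (mem_Iio.mp hx)]
  have hEFp : EqOn
      (fun x => (-(deriv (deriv φ) x) - ((kp : ℝ) : ℂ) ^ 2 * φ x) * (starRingEnd ℂ) (v x))
      (fun x => (-(deriv (deriv φ) x) - ((Kprof km kp x : ℝ) : ℂ) ^ 2 * φ x) *
        (starRingEnd ℂ) (if x < 0 then u x else v x)) (Ici 0) := by
    intro x hx
    simp only [Kprof, if_neg (not_lt.mpr (mem_Ici.mp hx))]
  have hEGm : EqOn (fun x => φ x * (starRingEnd ℂ) (u x))
      (fun x => φ x * (starRingEnd ℂ) (if x < 0 then u x else v x)) (Iio 0) := by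
    intro x hx
    simp only [if_pos (mem_Iio.mp hx)]
  have hEGp : EqOn (fun x => φ x * (starRingEnd ℂ) (v x))
      (fun x => φ x * (starRingEnd ℂ) (if x < 0 then u x else v x)) (Ici 0) := by
    intro x hx
    simp only [if_neg (not_lt.mpr (mem_Ici.mp hx))]
  rw [← intervalIntegral.integral_Iio_add_Ici (hfm.integrableOn.congr_fun hEFm measurableSet_Iio)
      (hfp.integrableOn.congr_fun hEFp measurableSet_Ici),
    ← intervalIntegral.integral_Iio_add_Ici (hgm.integrableOn.congr_fun hEGm measurableSet_Iio)
      (hgp.integrableOn.congr_fun hEGp measurableSet_Ici),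
    ← setIntegral_congr_fun measurableSet_Iio hEFm,
    ← setIntegral_congr_fun measurableSet_Ici hEFp,
    ← setIntegral_congr_fun measurableSet_Iio hEGm,
    ← setIntegral_congr_fun measurableSet_Ici hEGp,
    ← integral_Iic_eq_integral_Iio, ← integral_Iic_eq_integral_Iio,
    integral_Ici_eq_integral_Ioi, integral_Ici_eq_integral_Ioi,
    halfIic hφ hφc hu hu', halfIoi hφ hφc hv hv']
  have hGeq : Gbd φ u u' 0 = Gbd φ v v' 0 := by
    simp [Gbd, h0, h0']
  rw [hGeq]
  ring

end Aux

set_option maxHeartbeats 2000000 in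
/-- The generalized Fourier transform diagonalizes `φ ↦ -φ'' - K²φ`: for `φ ∈ C_c^∞(ℝ)`,
the function `ψ := -φ'' - K²φ` is in `L¹ ∩ L²` and `F±ψ(λ) = λ F±φ(λ)` for all `λ ∈ Λ±`. -/
theorem generalized_fourier_diagonalizes
    (km kp : ℝ) (hkm : 0 < km) (hkp : 0 < kp)
    (φ : ℝ → ℂ) (hφ : ContDiff ℝ (⊤ : ℕ∞) φ) (hφc : HasCompactSupport φ) :
    Integrable (fun x : ℝ => -(deriv (deriv φ) x) - ((Kprof km kp x : ℝ) : ℂ) ^ 2 * φ x) ∧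
    MemLp (fun x : ℝ => -(deriv (deriv φ) x) - ((Kprof km kp x : ℝ) : ℂ) ^ 2 * φ x) 2
      (volume : Measure ℝ) ∧
    (∀ l : ℝ, -kp ^ 2 < l →
      Fp km kp (fun x => -(deriv (deriv φ) x) - ((Kprof km kp x : ℝ) : ℂ) ^ 2 * φ x) l =
        (l : ℂ) * Fp km kp φ l) ∧
    (∀ l : ℝ, -km ^ 2 < l →
      Fm km kp (fun x => -(deriv (deriv φ) x) - ((Kprof km kp x : ℝ) : ℂ) ^ 2 * φ x) l =
        (l : ℂ) * Fm km kp φ l) := by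
  -- regularity facts
  have hφi : ContDiff ℝ ((⊤:ℕ∞) : WithTop ℕ∞) φ := hφ.of_le (by simp)
  have hφd : ContDiff ℝ ((⊤:ℕ∞) : WithTop ℕ∞) (deriv φ) := (contDiff_infty_iff_deriv.mp hφi).2
  have hφdd : Continuous (deriv (deriv φ)) := (contDiff_infty_iff_deriv.mp hφd).2.continuous
  -- the second-derivative part
  have hd2int : Integrable (fun x => deriv (deriv φ) x) :=
    hφdd.integrable_of_hasCompactSupport hφc.deriv.deriv
  have hd2mem : MemLp (fun x => deriv (deriv φ) x) 2 (volume : Measure ℝ) :=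
    Continuous.memLp_of_hasCompactSupport hφdd hφc.deriv.deriv
  -- the potential part
  have hKmeas : Measurable (Kprof km kp) := by
    unfold Kprof
    exact Measurable.ite measurableSet_Iio measurable_const measurable_const
  have hmeas : AEStronglyMeasurable (fun x => ((Kprof km kp x : ℝ) : ℂ) ^ 2 * φ x)
      (volume : Measure ℝ) :=
    (((Complex.measurable_ofReal.comp hKmeas).pow_const 2).mul
      hφ.continuous.measurable).aestronglyMeasurable
  have hb : ∀ x, ‖((Kprof km kp x : ℝ) : ℂ) ^ 2 * φ x‖ ≤ (km ^ 2 + kp ^ 2) * ‖φ x‖ := by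
    intro x
    rw [norm_mul, norm_pow]
    have h1 : ‖((Kprof km kp x : ℝ) : ℂ)‖ ^ 2 ≤ km ^ 2 + kp ^ 2 := by
      rw [Complex.norm_real, Real.norm_eq_abs, _root_.sq_abs]
      unfold Kprof
      split_ifs <;> nlinarith
    exact mul_le_mul_of_nonneg_right h1 (norm_nonneg _)
  have hgcont : Continuous (fun x => (km ^ 2 + kp ^ 2) * ‖φ x‖) :=
    continuous_const.mul hφ.continuous.norm
  have hgcs : HasCompactSupport (fun x => (km ^ 2 + kp ^ 2) * ‖φ x‖) :=
    hcs_of_three hφc fun x h1 _ _ => by simp [h1]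
  have hVint : Integrable (fun x => ((Kprof km kp x : ℝ) : ℂ) ^ 2 * φ x) :=
    Integrable.mono' (hgcont.integrable_of_hasCompactSupport hgcs) hmeas
      (ae_of_all _ hb)
  have hVmem : MemLp (fun x => ((Kprof km kp x : ℝ) : ℂ) ^ 2 * φ x) 2 (volume : Measure ℝ) :=
    MemLp.mono' (Continuous.memLp_of_hasCompactSupport hgcont hgcs) hmeas (ae_of_all _ hb)
  refine ⟨hd2int.neg.sub hVint, (hd2mem.neg.sub hVmem), ?_, ?_⟩
  · -- the `F⁺` identity
    intro l hl
    have hS : beta kp l + beta km l ≠ 0 := sum_ne hl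
    set cm : ℂ := -(Complex.I * beta km l) with hcm
    set cp : ℂ := -(Complex.I * beta kp l) with hcp
    have hu' : ∀ x, HasDerivAt (sol (Tcoef kp km l * cm) (-(0 * cm)) cm)
        (-((l : ℂ) + (km : ℂ) ^ 2) * sol (Tcoef kp km l) 0 cm x) x := by
      intro x
      have h := sol_hasDerivAt2 (Tcoef kp km l) 0 cm x
      rwa [hcm, neg_I_beta_sq] at h
    have hv' : ∀ x, HasDerivAt (sol (1 * cp) (-(Rcoef kp km l * cp)) cp)
        (-((l : ℂ) + (kp : ℂ) ^ 2) * sol 1 (Rcoef kp km l) cp x) x := by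
      intro x
      have h := sol_hasDerivAt2 1 (Rcoef kp km l) cp x
      rwa [hcp, neg_I_beta_sq] at h
    have h0 : sol (Tcoef kp km l) 0 cm 0 = sol 1 (Rcoef kp km l) cp 0 := by
      simp [sol, matchT hS]
    have h0' : sol (Tcoef kp km l * cm) (-(0 * cm)) cm 0
        = sol (1 * cp) (-(Rcoef kp km l * cp)) cp 0 := by
      simp only [sol, Complex.ofReal_zero, mul_zero, Complex.exp_zero, mul_one, zero_mul,
        neg_zero, add_zero]
      have := matchD hS
      rw [hcm, hcp]
      linear_combination (-Complex.I) * this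
    have hkey := key km kp l (sol (Tcoef kp km l) 0 cm) (sol 1 (Rcoef kp km l) cp)
      (sol (Tcoef kp km l * cm) (-(0 * cm)) cm) (sol (1 * cp) (-(Rcoef kp km l * cp)) cp)
      (sol_hasDerivAt _ _ _) hu' (sol_hasDerivAt _ _ _) hv' h0 h0' φ hφ hφc
    have hPsi : ∀ x : ℝ, Psip km kp l x
        = if x < 0 then sol (Tcoef kp km l) 0 cm x else sol 1 (Rcoef kp km l) cp x := by
      intro x
      rcases lt_trichotomy x 0 with hx | hx | hx
      · rw [if_pos hx, Psip, if_neg (by linarith)]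
        simp only [sol, hcm, mul_zero, zero_mul, add_zero, mul_zero]
        try ring_nf
      · subst hx
        rw [if_neg (lt_irrefl 0), Psip, if_neg (lt_irrefl 0)]
        simp [sol, matchT hS]
      · rw [if_neg (not_lt.mpr hx.le), Psip, if_pos hx]
        simp only [sol, hcp]
        try ring_nf
    unfold Fp
    have e1 : (fun x : ℝ => (-(deriv (deriv φ) x) - ((Kprof km kp x : ℝ) : ℂ) ^ 2 * φ x) *
          (starRingEnd ℂ) (Psip km kp l x))
        = fun x : ℝ => (-(deriv (deriv φ) x) - ((Kprof km kp x : ℝ) : ℂ) ^ 2 * φ x) *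
          (starRingEnd ℂ) (if x < 0 then sol (Tcoef kp km l) 0 cm x
            else sol 1 (Rcoef kp km l) cp x) := by
      funext x; rw [hPsi x]
    have e2 : (fun x : ℝ => φ x * (starRingEnd ℂ) (Psip km kp l x))
        = fun x : ℝ => φ x * (starRingEnd ℂ) (if x < 0 then sol (Tcoef kp km l) 0 cm x
            else sol 1 (Rcoef kp km l) cp x) := by
      funext x; rw [hPsi x]
    rw [e1, e2]
    exact hkey
  · -- the `F⁻` identity
    intro l hl
    have hS : beta km l + beta kp l ≠ 0 := sum_ne (km := kp) (kp := km) hl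
    set cm : ℂ := Complex.I * beta km l with hcm
    set cp : ℂ := Complex.I * beta kp l with hcp
    have hu' : ∀ x, HasDerivAt (sol (1 * cm) (-(Rcoef km kp l * cm)) cm)
        (-((l : ℂ) + (km : ℂ) ^ 2) * sol 1 (Rcoef km kp l) cm x) x := by
      intro x
      have h := sol_hasDerivAt2 1 (Rcoef km kp l) cm x
      rwa [hcm, I_beta_sq] at h
    have hv' : ∀ x, HasDerivAt (sol (Tcoef km kp l * cp) (-(0 * cp)) cp)
        (-((l : ℂ) + (kp : ℂ) ^ 2) * sol (Tcoef km kp l) 0 cp x) x := by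
      intro x
      have h := sol_hasDerivAt2 (Tcoef km kp l) 0 cp x
      rwa [hcp, I_beta_sq] at h
    have h0 : sol 1 (Rcoef km kp l) cm 0 = sol (Tcoef km kp l) 0 cp 0 := by
      simp [sol, matchT hS]
    have h0' : sol (1 * cm) (-(Rcoef km kp l * cm)) cm 0
        = sol (Tcoef km kp l * cp) (-(0 * cp)) cp 0 := by
      simp only [sol, Complex.ofReal_zero, mul_zero, Complex.exp_zero, mul_one, zero_mul,
        neg_zero, add_zero]
      have := matchD hS
      rw [hcm, hcp]
      linear_combination (-Complex.I) * this
    have hkey := key km kp l (sol 1 (Rcoef km kp l) cm) (sol (Tcoef km kp l) 0 cp)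
      (sol (1 * cm) (-(Rcoef km kp l * cm)) cm) (sol (Tcoef km kp l * cp) (-(0 * cp)) cp)
      (sol_hasDerivAt _ _ _) hu' (sol_hasDerivAt _ _ _) hv' h0 h0' φ hφ hφc
    have hPsi : ∀ x : ℝ, Psim km kp l x
        = if x < 0 then sol 1 (Rcoef km kp l) cm x else sol (Tcoef km kp l) 0 cp x := by
      intro x
      rcases lt_or_ge x 0 with hx | hx
      · rw [if_pos hx, Psim, if_pos hx]
        simp only [sol, hcm]
        try ring_nf
      · rw [if_neg (not_lt.mpr hx), Psim, if_neg (not_lt.mpr hx)]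
        simp only [sol, hcp, mul_zero, zero_mul, add_zero]
        try ring_nf
    unfold Fm
    have e1 : (fun x : ℝ => (-(deriv (deriv φ) x) - ((Kprof km kp x : ℝ) : ℂ) ^ 2 * φ x) *
          (starRingEnd ℂ) (Psim km kp l x))
        = fun x : ℝ => (-(deriv (deriv φ) x) - ((Kprof km kp x : ℝ) : ℂ) ^ 2 * φ x) *
          (starRingEnd ℂ) (if x < 0 then sol 1 (Rcoef km kp l) cm x
            else sol (Tcoef km kp l) 0 cp x) := by
      funext x; rw [hPsi x]
    have e2 : (fun x : ℝ => φ x * (starRingEnd ℂ) (Psim km kp l x))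
        = fun x : ℝ => φ x * (starRingEnd ℂ) (if x < 0 then sol 1 (Rcoef km kp l) cm x
            else sol (Tcoef km kp l) 0 cp x) := by
      funext x; rw [hPsi x]
    rw [e1, e2]
    exact hkey
end
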